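/- Let (φ_i)_{i∈I} be a finite frame for ℝ^n and let λ > 0 be such that the saturated measurement operator S_λ is one-to-one on the closed unit ball B of ℝ^n. If κ ≥ 0 satisfies κ‖x−y‖ ≤ ‖S_λ(x) − S_λ(y)‖ for all x, y ∈ B (i.e., κ is a lower Lipschitz bound for S_λ on B), then for every x ∈ B and every z ∈ ℝ^n one has κ²‖z‖² ≤ Σ_{i∈I_λ(x)} |⟨z,φ_i⟩|²; that is, κ² is a lower frame bound of every unsaturated collection. -/

import Mathlib

open RealInnerProductSpace Finset Filter Topology Metric

/-! Perturb a point `x` of the ball along `z`: `a = (1 - t‖z‖) • x` and `b = a + t • z` stay in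
the ball, and for small `t > 0` the saturated coordinates of `S_λ a` and `S_λ b` both equal
those of `S_λ x`, because `σ_λ` is locally constant off `[-λ, λ]`. Since `σ_λ` is 1-Lipschitz,
this gives `κ t ‖z‖ ≤ ‖S_λ a - S_λ b‖ ≤ t (∑_{i ∈ I_λ(x)} ⟨z, φ_i⟩²)^(1/2)`. -/

noncomputable def saturation (lam u : ℝ) : ℝ := Real.sign u * min |u| lam

lemma saturation_eq_projIcc {lam : ℝ} (hlam : 0 ≤ lam) (u : ℝ) :
    saturation lam u = Set.projIcc (-lam) lam (by linarith) u := by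
  rw [Set.coe_projIcc, saturation]
  rcases lt_trichotomy u 0 with hu | rfl | hu
  · rw [Real.sign_of_neg hu, abs_of_neg hu, min_eq_right (by linarith : u ≤ lam), neg_one_mul]
    rcases le_total (-u) lam with h | h
    · rw [min_eq_left h, max_eq_right (by linarith), neg_neg]
    · rw [min_eq_right h, max_eq_left (by linarith)]
  · simp [hlam]
  · rw [Real.sign_of_pos hu, abs_of_pos hu, one_mul, min_comm,
      max_eq_right (by linarith [le_min hlam hu.le])]

lemma lipschitzWith_saturation {lam : ℝ} (hlam : 0 ≤ lam) :
    LipschitzWith 1 (saturation lam) := by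
  have h : saturation lam = Subtype.val ∘ Set.projIcc (-lam) lam (by linarith) :=
    funext (saturation_eq_projIcc hlam)
  simpa [h] using (LipschitzWith.subtype_val _).comp (LipschitzWith.projIcc (by linarith))

lemma saturation_eventuallyEq_of_lt_abs {lam u : ℝ} (hlam : 0 ≤ lam) (hu : lam < |u|) :
    saturation lam =ᶠ[𝓝 u] fun _ => saturation lam u := by
  simp only [EventuallyEq, saturation_eq_projIcc hlam, Set.coe_projIcc]
  rcases lt_abs.1 hu with hu | hu
  · filter_upwards [lt_mem_nhds hu] with v hv
    rw [min_eq_left hv.le, min_eq_left hu.le]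
  · filter_upwards [gt_mem_nhds (by linarith : u < -lam)] with v hv
    rw [min_eq_right (by linarith), min_eq_right (by linarith), max_eq_left hv.le,
      max_eq_left (by linarith)]

section Measurement

variable {E ι : Type*} [NormedAddCommGroup E] [InnerProductSpace ℝ E] [Fintype ι]

noncomputable def saturatedMeasurement (φ : ι → E) (lam : ℝ) (x : E) : EuclideanSpace ℝ ι :=
  WithLp.toLp 2 fun i => saturation lam ⟪x, φ i⟫

noncomputable def unsaturatedIndices (φ : ι → E) (lam : ℝ) (x : E) : Finset ι :=
  univ.filter fun i => |⟪x, φ i⟫| ≤ lam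

variable (φ : ι → E) {lam : ℝ}

lemma eventually_saturatedMeasurement_eq (hlam : 0 ≤ lam) (x : E) :
    ∀ᶠ y in 𝓝 x, ∀ i, i ∉ unsaturatedIndices φ lam x →
      saturatedMeasurement φ lam y i = saturatedMeasurement φ lam x i := by
  refine eventually_all.2 fun i => eventually_imp_distrib_left.2 fun hi => ?_
  simp only [unsaturatedIndices, mem_filter, mem_univ, true_and, not_le] at hi
  have hinner : Tendsto (fun y => ⟪y, φ i⟫) (𝓝 x) (𝓝 ⟪x, φ i⟫) :=
    (continuous_id.inner continuous_const).tendsto x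
  exact hinner.eventually (saturation_eventuallyEq_of_lt_abs hlam hi)

lemma norm_saturatedMeasurement_sub_sq_le (hlam : 0 ≤ lam) {x a b : E}
    (hab : ∀ i, i ∉ unsaturatedIndices φ lam x →
      saturatedMeasurement φ lam a i = saturatedMeasurement φ lam b i) :
    ‖saturatedMeasurement φ lam a - saturatedMeasurement φ lam b‖ ^ 2 ≤
      ∑ i ∈ unsaturatedIndices φ lam x, ⟪a - b, φ i⟫ ^ 2 := by
  have hsat (i : ι) (hi : i ∉ unsaturatedIndices φ lam x) :
      (saturatedMeasurement φ lam a - saturatedMeasurement φ lam b) i ^ 2 = 0 := by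
    rw [PiLp.sub_apply, hab i hi, sub_self, sq, mul_zero]
  rw [EuclideanSpace.real_norm_sq_eq, ← sum_subset (subset_univ _) fun i _ => hsat i]
  refine sum_le_sum fun i _ => sq_le_sq.2 ?_
  have h := (lipschitzWith_saturation hlam).dist_le_mul ⟪a, φ i⟫ ⟪b, φ i⟫
  rwa [NNReal.coe_one, one_mul, Real.dist_eq, Real.dist_eq, ← inner_sub_left] at h

lemma norm_one_sub_smul_add_le_one {x w : E} {s : ℝ} (hx : ‖x‖ ≤ 1) (hs : s ≤ 1)
    (hw : ‖w‖ ≤ s) :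
    ‖(1 - s) • x + w‖ ≤ 1 :=
  calc ‖(1 - s) • x + w‖ ≤ (1 - s) * ‖x‖ + ‖w‖ := by
        grw [norm_add_le, norm_smul, Real.norm_of_nonneg (by linarith)]
    _ ≤ (1 - s) * 1 + s := by gcongr
    _ = 1 := by ring

theorem sq_mul_norm_sq_le_sum_unsaturated (hlam : 0 ≤ lam) {κ : ℝ} (hκ : 0 ≤ κ)
    (hlip : ∀ x ∈ closedBall (0 : E) 1, ∀ y ∈ closedBall (0 : E) 1,
      κ * ‖x - y‖ ≤ ‖saturatedMeasurement φ lam x - saturatedMeasurement φ lam y‖)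
    {x : E} (hx : x ∈ closedBall 0 1) (z : E) :
    κ ^ 2 * ‖z‖ ^ 2 ≤ ∑ i ∈ unsaturatedIndices φ lam x, ⟪z, φ i⟫ ^ 2 := by
  rw [mem_closedBall_zero_iff] at hx
  set a : ℝ → E := fun t => (1 - t * ‖z‖) • x
  set b : ℝ → E := fun t => a t + t • z
  have ha : Tendsto a (𝓝[>] 0) (𝓝 x) := by
    refine tendsto_nhdsWithin_of_tendsto_nhds (Continuous.tendsto' ?_ 0 x (by simp [a]))
    fun_prop
  have hb : Tendsto b (𝓝[>] 0) (𝓝 x) := by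
    simpa [b] using ha.add ((tendsto_nhdsWithin_of_tendsto_nhds tendsto_id).smul_const z)
  have hsmall : ∀ᶠ t in 𝓝[>] 0, t * ‖z‖ ≤ 1 := by
    refine (tendsto_nhdsWithin_of_tendsto_nhds ?_).eventually (ge_mem_nhds zero_lt_one)
    exact Continuous.tendsto' (by fun_prop) 0 0 (zero_mul _)
  have hsat := eventually_saturatedMeasurement_eq φ hlam x
  obtain ⟨t, ⟨⟨hts, hat⟩, hbt⟩, ht⟩ :=
    (((hsmall.and (ha.eventually hsat)).and (hb.eventually hsat)).and self_mem_nhdsWithin).exists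
  have hab : a t - b t = -(t • z) := by simp [b]
  have ha_mem : a t ∈ closedBall 0 1 := by
    simpa [a] using norm_one_sub_smul_add_le_one (w := 0) hx hts (by simp; positivity)
  have hb_mem : b t ∈ closedBall 0 1 := by
    simpa [b, a] using norm_one_sub_smul_add_le_one hx hts
      (by rw [norm_smul, Real.norm_of_nonneg ht.le])
  have hupper := norm_saturatedMeasurement_sub_sq_le φ hlam
    (fun i hi => (hat i hi).trans (hbt i hi).symm)
  have hlower := pow_le_pow_left₀ (by positivity) (hlip _ ha_mem _ hb_mem) 2
  simp only [hab, inner_neg_left, real_inner_smul_left, norm_neg, norm_smul,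
    Real.norm_of_nonneg ht.le, neg_sq, mul_pow, ← mul_sum] at hupper hlower
  refine le_of_mul_le_mul_left ?_ (pow_pos ht 2)
  linarith

end Measurement

theorem saturation_lower_lipschitz_gives_frame_bound_general
    {n : ℕ} {ι : Type*} [Fintype ι]
    (φ : ι → EuclideanSpace ℝ (Fin n)) (lam : ℝ) (hlam : 0 < lam)
    (S : EuclideanSpace ℝ (Fin n) → EuclideanSpace ℝ ι)
    (hS : ∀ x, S x = fun i : ι => Real.sign ⟪x, φ i⟫ * min |⟪x, φ i⟫| lam)
    (κ : ℝ) (hκ : 0 ≤ κ)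
    (hlip : ∀ x ∈ Metric.closedBall (0 : EuclideanSpace ℝ (Fin n)) 1,
      ∀ y ∈ Metric.closedBall (0 : EuclideanSpace ℝ (Fin n)) 1,
        κ * ‖x - y‖ ≤ ‖S x - S y‖) :
    ∀ x ∈ Metric.closedBall (0 : EuclideanSpace ℝ (Fin n)) 1,
      ∀ z : EuclideanSpace ℝ (Fin n),
        κ ^ 2 * ‖z‖ ^ 2 ≤
          ∑ i ∈ univ.filter (fun i : ι => |⟪x, φ i⟫| ≤ lam), ⟪z, φ i⟫ ^ 2 := by
  obtain rfl : S = saturatedMeasurement φ lam :=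
    funext fun x => WithLp.ofLp_injective 2 (hS x)
  exact fun x hx z => sq_mul_norm_sq_le_sum_unsaturated φ hlam.le hκ hlip hx z

/-- If `κ` is a lower Lipschitz bound on the closed unit ball for an
injective saturated measurement operator `S_λ` associated with a finite frame, then
`κ²` is a lower frame bound of every unsaturated collection `(φ_i)_{i ∈ I_λ(x)}`. -/
theorem saturation_lower_lipschitz_gives_frame_bound
    {n : ℕ} {ι : Type*} [Fintype ι]
    (φ : ι → EuclideanSpace ℝ (Fin n)) (lam : ℝ) (hlam : 0 < lam)
    (hframe : Submodule.span ℝ (Set.range φ) = ⊤)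
    (S : EuclideanSpace ℝ (Fin n) → EuclideanSpace ℝ ι)
    (hS : ∀ x, S x = fun i : ι => Real.sign ⟪x, φ i⟫ * min |⟪x, φ i⟫| lam)
    (hinj : Set.InjOn S (Metric.closedBall (0 : EuclideanSpace ℝ (Fin n)) 1))
    (κ : ℝ) (hκ : 0 ≤ κ)
    (hlip : ∀ x ∈ Metric.closedBall (0 : EuclideanSpace ℝ (Fin n)) 1,
      ∀ y ∈ Metric.closedBall (0 : EuclideanSpace ℝ (Fin n)) 1,
        κ * ‖x - y‖ ≤ ‖S x - S y‖) :
    ∀ x ∈ Metric.closedBall (0 : EuclideanSpace ℝ (Fin n)) 1,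
      ∀ z : EuclideanSpace ℝ (Fin n),
        κ ^ 2 * ‖z‖ ^ 2 ≤
          ∑ i ∈ univ.filter (fun i : ι => |⟪x, φ i⟫| ≤ lam), ⟪z, φ i⟫ ^ 2 :=
  saturation_lower_lipschitz_gives_frame_bound_general φ lam hlam S hS κ hκ hlip
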